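/- Let Λ be a nonzero real number and M a real symmetric positive definite 3×3 matrix with tr(√M) = |Λ|. For a real symmetric 3×3 matrix N let G_M(N) denote the unique real symmetric 3×3 matrix G satisfying G·M^{-1/2} + M^{-1/2}·G = -M⁻¹·N·M⁻¹, and set ⟨P,Q⟩ := -tr(G_M(P)·Q). Then: (i) G_M(M) = -(1/2)·M^{-1/2}; (ii) ⟨M,M⟩ = |Λ|/2; and (iii) for every real symmetric 3×3 matrix N, the matrix N - (1/|Λ|)·tr(M^{-1/2}·N)·M is ⟨·,·⟩-orthogonal to M, i.e. it equals the orthogonal projection of N away from the span of M in the inner product ⟨·,·⟩. -/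

import Mathlib

/-!
With `S = √M`, the matrix `S⁻¹` is positive definite, so the Sylvester equation
`X S⁻¹ + S⁻¹ X = B` has at most one Hermitian solution; `-(1/2) S⁻¹` solves it for
`B = -M⁻¹`, which is (i). Hence `-tr(G_M(M) X) = (1/2) tr(S⁻¹ X)`, and since `S⁻¹ M = S`
with `tr S = |Λ|`, (ii) and (iii) are trace computations.
-/

open Matrix

section

open scoped ComplexOrder

/-- The positive semidefinite square root of a positive semidefinite matrix, as defined in
Mathlib (Dec 2024) under the name `Matrix.PosSemidef.sqrt` (since removed). -/
noncomputable def Matrix.PosSemidef.sqrt {n 𝕜 : Type*} [RCLike 𝕜] [Fintype n] [DecidableEq n]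
    {A : Matrix n n 𝕜} (hA : A.PosSemidef) : Matrix n n 𝕜 :=
  hA.1.eigenvectorUnitary.1 * diagonal ((↑) ∘ (√·) ∘ hA.1.eigenvalues) *
    (star hA.1.eigenvectorUnitary : Matrix n n 𝕜)

end

namespace Matrix

open scoped ComplexOrder

variable {n 𝕜 : Type*} [RCLike 𝕜] [Fintype n] [DecidableEq n] {A : Matrix n n 𝕜}

theorem PosSemidef.sqrt_mul_sqrt (hA : A.PosSemidef) : hA.sqrt * hA.sqrt = A := by
  conv_rhs => rw [hA.1.spectral_theorem, Unitary.conjStarAlgAut_apply]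
  rw [PosSemidef.sqrt, show ∀ a b c : Matrix n n 𝕜,
      a * b * c * (a * b * c) = a * (b * (c * a) * b) * c by intros; simp only [Matrix.mul_assoc],
    Unitary.coe_star_mul_self, Matrix.mul_one, diagonal_mul_diagonal]
  congr 3
  ext i
  simp [← RCLike.ofReal_mul, Real.mul_self_sqrt (hA.eigenvalues_nonneg i)]

theorem PosSemidef.posSemidef_sqrt (hA : A.PosSemidef) : hA.sqrt.PosSemidef := by
  rw [PosSemidef.sqrt, star_eq_conjTranspose]
  have hdiag : (diagonal ((↑) ∘ (√·) ∘ hA.1.eigenvalues) : Matrix n n 𝕜).PosSemidef :=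
    posSemidef_diagonal_iff.mpr fun i => by simp [Real.sqrt_nonneg]
  exact hdiag.mul_mul_conjTranspose_same _

theorem PosDef.posDef_sqrt (hA : A.PosDef) : hA.posSemidef.sqrt.PosDef := by
  refine hA.posSemidef.posSemidef_sqrt.posDef_iff_isUnit.mpr ?_
  have h := hA.isUnit
  rw [← hA.posSemidef.sqrt_mul_sqrt, isUnit_iff_isUnit_det, det_mul] at h
  exact (isUnit_iff_isUnit_det _).mpr (isUnit_of_mul_isUnit_left h)

theorem PosDef.sqrt_inv_mul_self (hA : A.PosDef) :
    hA.posSemidef.sqrt⁻¹ * A = hA.posSemidef.sqrt := by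
  calc _ = hA.posSemidef.sqrt⁻¹ * (hA.posSemidef.sqrt * hA.posSemidef.sqrt) := by
        rw [hA.posSemidef.sqrt_mul_sqrt]
    _ = _ := nonsing_inv_mul_cancel_left _ _ (isUnit_iff_isUnit_det _ |>.mp hA.posDef_sqrt.isUnit)

theorem PosDef.sqrt_inv_mul_sqrt_inv (hA : A.PosDef) :
    hA.posSemidef.sqrt⁻¹ * hA.posSemidef.sqrt⁻¹ = A⁻¹ := by
  rw [← mul_inv_rev, hA.posSemidef.sqrt_mul_sqrt]

theorem PosDef.eq_zero_of_mul_add_mul_eq_zero {D : Matrix n n 𝕜} (hA : A.PosDef)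
    (hD : D.IsHermitian) (h : D * A + A * D = 0) : D = 0 := by
  -- `D A D = Dᴴ A D` is positive semidefinite, and its trace is zero because `D` anticommutes
  -- with `A`.
  have hDA : D * A = -(A * D) := eq_neg_of_add_eq_zero_left h
  have htrace : (D * A * D).trace = 0 := by
    have h2 : (D * A * D).trace + (A * D * D).trace = 0 := by
      rw [← trace_add, ← add_mul, h, zero_mul, trace_zero]
    rwa [trace_mul_cycle A D D, add_self_eq_zero] at h2
  have hDAD : D * A * D = 0 := by
    have hpsd := hA.posSemidef.conjTranspose_mul_mul_same D
    rw [hD.eq] at hpsd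
    exact hpsd.trace_eq_zero_iff.mp htrace
  have hDD : D * D = 0 := by
    rwa [hDA, neg_mul, neg_eq_zero, Matrix.mul_assoc, hA.isUnit.mul_right_eq_zero] at hDAD
  rw [← trace_conjTranspose_mul_self_eq_zero_iff, hD.eq, hDD, trace_zero]

end Matrix

/-- Let `Λ ≠ 0` and let `M` be real symmetric positive
definite (3×3) with `tr(√M) = |Λ|`.  For symmetric `N`, `G N` denotes the
unique symmetric solution of `G·M^{-1/2} + M^{-1/2}·G = -M⁻¹·N·M⁻¹` (taken as
hypothesis `hG`), and `⟨P,Q⟩ := -tr(G(P)·Q)`.  Then: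
(i) `G M = -(1/2)·M^{-1/2}`;
(ii) `⟨M,M⟩ = |Λ|/2`;
(iii) for every symmetric `N`, the matrix `N - (1/|Λ|)·tr(M^{-1/2}·N)·M` is
`⟨·,·⟩`-orthogonal to `M`, and it differs from `N` by a multiple of `M`
(i.e. it is the orthogonal projection of `N` away from the span of `M`). -/
theorem stmt_3 (Λ : ℝ) (hΛ : Λ ≠ 0) (M : Matrix (Fin 3) (Fin 3) ℝ) (hM : M.PosDef)
    (htr : hM.posSemidef.sqrt.trace = |Λ|)
    (G : Matrix (Fin 3) (Fin 3) ℝ → Matrix (Fin 3) (Fin 3) ℝ)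
    (hG : ∀ N : Matrix (Fin 3) (Fin 3) ℝ, N.IsHermitian →
      (G N).IsHermitian ∧
      G N * (hM.posSemidef.sqrt)⁻¹ + (hM.posSemidef.sqrt)⁻¹ * G N = -(M⁻¹ * N * M⁻¹)) :
    G M = -(1 / 2 : ℝ) • (hM.posSemidef.sqrt)⁻¹ ∧
    -(G M * M).trace = |Λ| / 2 ∧
    (∀ N : Matrix (Fin 3) (Fin 3) ℝ, N.IsHermitian →
      -(G M * (N - ((1 / |Λ|) * ((hM.posSemidef.sqrt)⁻¹ * N).trace) • M)).trace = 0 ∧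
      ∃ c : ℝ, N - (N - ((1 / |Λ|) * ((hM.posSemidef.sqrt)⁻¹ * N).trace) • M) = c • M) := by
  have hSinv : hM.posSemidef.sqrt⁻¹.PosDef := hM.posDef_sqrt.inv
  have hGM : G M = -(1 / 2 : ℝ) • hM.posSemidef.sqrt⁻¹ := by
    obtain ⟨hGM_herm, hGM_eq⟩ := hG M hM.1
    refine sub_eq_zero.mp (hSinv.eq_zero_of_mul_add_mul_eq_zero
      (hGM_herm.sub (hSinv.isHermitian.smul (.all _))) ?_)
    rw [sub_mul, mul_sub, sub_add_sub_comm, hGM_eq, smul_mul_assoc, mul_smul_comm, ← add_smul,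
      hM.sqrt_inv_mul_sqrt_inv, nonsing_inv_mul _ (isUnit_iff_isUnit_det _ |>.mp hM.isUnit),
      one_mul]
    norm_num
  have trace_GM_mul (X : Matrix (Fin 3) (Fin 3) ℝ) :
      (G M * X).trace = -(1 / 2) * (hM.posSemidef.sqrt⁻¹ * X).trace := by
    rw [hGM, smul_mul_assoc, trace_smul, smul_eq_mul]
  refine ⟨hGM, ?_, fun N _ => ⟨?_, _, sub_sub_cancel _ _⟩⟩
  · rw [trace_GM_mul, hM.sqrt_inv_mul_self, htr]
    ring
  · rw [trace_GM_mul, mul_sub, mul_smul_comm, hM.sqrt_inv_mul_self, trace_sub, trace_smul, htr,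
      smul_eq_mul]
    field_simp [abs_ne_zero.mpr hΛ]
    ring
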